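/- arXiv:1212.0713 — 3 statements merged into one kernel-verified Lean document; each statement's English description precedes it below -/
import Mathlib

section
/- Let V be a finite-dimensional complex inner product space regarded as a real inner product space via the real part ⟨·,·⟩ of its Hermitian inner product, J multiplication by i, and U a real subspace of V satisfying J(U) ∩ U^⊥ = {0}. Then the operator G : U → U, G(u) = p_U(J(u)), is invertible (bijective). -/
open scoped RealInnerProductSpace

/-- A complex inner product space regarded as a real inner product space via the real
part of its Hermitian inner product. -/
noncomputable instance {V : Type*} [NormedAddCommGroup V] [InnerProductSpace ℂ V] :
    InnerProductSpace ℝ V := InnerProductSpace.complexToReal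

/-- Multiplication by `i = √-1` as an `ℝ`-linear map `J : V → V`. -/
noncomputable def Jmul (V : Type*) [NormedAddCommGroup V] [InnerProductSpace ℂ V] :
    V →ₗ[ℝ] V :=
  LinearMap.restrictScalars ℝ (Complex.I • (LinearMap.id : V →ₗ[ℂ] V))

/-- The operator `G : U → U`, `G(u) = p_U(J(u))`, where `p_U` is the orthogonal
projection of `V` onto the real subspace `U`. -/
noncomputable def Gop {V : Type*} [NormedAddCommGroup V] [InnerProductSpace ℂ V]
    [FiniteDimensional ℂ V] (U : Submodule ℝ V) : U →ₗ[ℝ] U :=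
  letI : FiniteDimensional ℝ V := FiniteDimensional.trans ℝ ℂ V
  (Submodule.orthogonalProjection U).toLinearMap ∘ₗ (Jmul V) ∘ₗ U.subtype

/-- If the real subspace `U` satisfies `J(U) ∩ U^⊥ = {0}`, then the operator
`G : U → U`, `G(u) = p_U(J(u))`, is invertible (bijective). -/
theorem Gop_bijective {V : Type*} [NormedAddCommGroup V] [InnerProductSpace ℂ V]
    [FiniteDimensional ℂ V] (U : Submodule ℝ V)
    (hU : U.map (Jmul V) ⊓ Uᗮ = ⊥) :
    Function.Bijective (Gop U) := by
  letI : FiniteDimensional ℝ V := FiniteDimensional.trans ℝ ℂ V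
  have hinj : Function.Injective (Gop U) := by
    rw [← LinearMap.ker_eq_bot]
    rw [Submodule.eq_bot_iff]
    intro u hu
    have hGu : Submodule.orthogonalProjection U (Jmul V (u : V)) = 0 := hu
    have hmem : Jmul V (u : V) ∈ Uᗮ := by
      rwa [Submodule.orthogonalProjectionOnto_eq_zero_iff] at hGu
    have hmem2 : Jmul V (u : V) ∈ U.map (Jmul V) := ⟨u, u.2, rfl⟩
    have h0 : Jmul V (u : V) = 0 := by
      have : Jmul V (u : V) ∈ U.map (Jmul V) ⊓ Uᗮ := ⟨hmem2, hmem⟩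
      rw [hU] at this
      exact this
    have : Complex.I • (u : V) = 0 := h0
    have hu0 : (u : V) = 0 := by
      have := congrArg (fun x => (-Complex.I) • x) this
      simpa [smul_smul, Complex.I_mul_I] using this
    exact Subtype.ext hu0
  exact ⟨hinj, LinearMap.injective_iff_surjective.mp hinj⟩
end

section
/- Let V be a real inner product space, J : V → V a linear isometry with J² = -Id, and N, D finite-dimensional subspaces of V with J(N) = D and J(D) = N. Let P_N and P_D be the orthogonal projections of V onto N and D, and set U = P_N(D) and T = P_D(N). If v ∈ T and ⟨v, u⟩ = 0 for all u ∈ U, then v = 0; equivalently, J(U) ∩ U^⊥ = {0}. -/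
open scoped RealInnerProductSpace

/-- Let `V` be a real inner product space, `J` a linear isometry with `J² = -Id`, and
`N`, `D` finite-dimensional subspaces with `J(N) = D` and `J(D) = N`. Set
`U = P_N(D)` and `T = P_D(N)`. If `v ∈ T` is orthogonal to all of `U` then `v = 0`;
equivalently, `J(U) ∩ U^⊥ = {0}`. -/
theorem T_orth_U_eq_zero {V : Type*} [NormedAddCommGroup V]
    [InnerProductSpace ℝ V]
    (J : V →ₗ[ℝ] V)
    (hJiso : ∀ u v : V, ⟪J u, J v⟫ = ⟪u, v⟫)
    (hJ2 : J ∘ₗ J = -LinearMap.id)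
    (N D : Submodule ℝ V) [FiniteDimensional ℝ N] [FiniteDimensional ℝ D]
    (hND : N.map J = D) (hDN : D.map J = N) :
    (∀ v ∈ N.map (D.subtype ∘ₗ D.orthogonalProjectionOnto.toLinearMap),
        (∀ u ∈ D.map (N.subtype ∘ₗ N.orthogonalProjectionOnto.toLinearMap), ⟪v, u⟫ = 0)
        → v = 0)
    ∧ (D.map (N.subtype ∘ₗ N.orthogonalProjectionOnto.toLinearMap)).map J
        ⊓ (D.map (N.subtype ∘ₗ N.orthogonalProjectionOnto.toLinearMap))ᗮ = ⊥ := by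
  have claim1 : ∀ v ∈ N.map (D.subtype ∘ₗ D.orthogonalProjectionOnto.toLinearMap),
      (∀ u ∈ D.map (N.subtype ∘ₗ N.orthogonalProjectionOnto.toLinearMap), ⟪v, u⟫ = 0)
      → v = 0 := by
    rintro v ⟨n, hn, rfl⟩ h
    simp only [LinearMap.coe_comp, Function.comp_apply, ContinuousLinearMap.coe_coe,
      Submodule.coe_subtype] at h ⊢
    set v : V := (D.orthogonalProjectionOnto n : V) with hv
    have hvD : v ∈ D := (D.orthogonalProjectionOnto n).2
    have hPNv : ((N.orthogonalProjectionOnto v : V)) ∈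
        D.map (N.subtype ∘ₗ N.orthogonalProjectionOnto.toLinearMap) := ⟨v, hvD, rfl⟩
    have h1 : ⟪v, (N.orthogonalProjectionOnto v : V)⟫ = 0 := h _ hPNv
    have h2 : ⟪v - (N.orthogonalProjectionOnto v : V), (N.orthogonalProjectionOnto v : V)⟫ = 0 :=
      (Submodule.mem_orthogonal' N _).mp (by
        have := N.sub_starProjection_mem_orthogonal v; rwa [Submodule.starProjection_apply] at this) _
        (N.orthogonalProjectionOnto v).2
    have h3 : (N.orthogonalProjectionOnto v : V) = 0 := by
      have : ⟪(N.orthogonalProjectionOnto v : V), (N.orthogonalProjectionOnto v : V)⟫ = 0 := by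
        have := inner_sub_left (𝕜 := ℝ) v ((N.orthogonalProjectionOnto v : V))
          ((N.orthogonalProjectionOnto v : V))
        rw [h2, h1] at this
        linarith
      exact inner_self_eq_zero.mp this
    have hvN : v ∈ Nᗮ := by
      have := N.sub_starProjection_mem_orthogonal v
      rwa [Submodule.starProjection_apply, h3, sub_zero] at this
    have : ⟪v, v⟫ = 0 := by
      have e1 : ⟪v, v⟫ = ⟪n, (D.orthogonalProjectionOnto v : V)⟫ := by
        rw [hv, ← Submodule.starProjection_apply, Submodule.inner_starProjection_left_eq_right]
        rfl
      rw [← Submodule.starProjection_apply D v, Submodule.starProjection_eq_self_iff.mpr hvD] at e1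
      rw [e1]
      exact (Submodule.mem_orthogonal N v).mp hvN n hn
    exact inner_self_eq_zero.mp this
  refine ⟨claim1, ?_⟩
  rw [Submodule.eq_bot_iff]
  rintro x ⟨hx1, hx2⟩
  obtain ⟨u, hu, rfl⟩ := hx1
  obtain ⟨d, hd, rfl⟩ := hu
  simp only [LinearMap.coe_comp, Function.comp_apply, ContinuousLinearMap.coe_coe,
    Submodule.coe_subtype] at hx2 ⊢
  -- J (P_N d) = P_D (J d)
  have hJd : J d ∈ N := hDN ▸ Submodule.mem_map_of_mem hd
  have hkey : (D.orthogonalProjectionOnto (J d) : V) = J (N.orthogonalProjectionOnto d : V) := by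
    rw [← Submodule.starProjection_apply D (J d)]
    apply Submodule.eq_starProjection_of_mem_of_inner_eq_zero
    · exact hND ▸ Submodule.mem_map_of_mem (N.orthogonalProjectionOnto d).2
    · intro w hw
      obtain ⟨m, hm, rfl⟩ := hND ▸ hw
      rw [← map_sub, hJiso]
      rw [← Submodule.starProjection_apply N d]
      exact N.starProjection_inner_eq_zero d m hm
  have hmemT : J (N.orthogonalProjectionOnto d : V) ∈
      N.map (D.subtype ∘ₗ D.orthogonalProjectionOnto.toLinearMap) := by
    refine ⟨J d, hJd, ?_⟩
    simpa using hkey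
  refine claim1 _ hmemT fun u hu => ?_
  rw [real_inner_comm]
  exact (Submodule.mem_orthogonal _ _).mp hx2 u hu
end

section
/- Let V be a real inner product space, J : V → V a linear isometry with J² = -Id, and N, D finite-dimensional subspaces of V with J(N) = D and J(D) = N. Let P_N and P_D be the orthogonal projections of V onto N and D, and set U = P_N(D). Then the alternating bilinear form ω(u, v) = ⟨J(u), v⟩ is nondegenerate on U: for every u ∈ U with u ≠ 0 there exists v ∈ U with ω(u, v) ≠ 0. -/
open scoped RealInnerProductSpace

/-- Let `V` be a real inner product space, `J` a linear isometry with `J² = -Id`, and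
`N`, `D` finite-dimensional subspaces with `J(N) = D` and `J(D) = N`. Set
`U = P_N(D)`. Then the alternating bilinear form `ω(u, v) = ⟨J(u), v⟩` is
nondegenerate on `U`. -/
theorem omega_nondegenerate_on_U {V : Type*} [NormedAddCommGroup V]
    [InnerProductSpace ℝ V]
    (J : V →ₗ[ℝ] V)
    (hJiso : ∀ u v : V, ⟪J u, J v⟫ = ⟪u, v⟫)
    (hJ2 : J ∘ₗ J = -LinearMap.id)
    (N D : Submodule ℝ V) [FiniteDimensional ℝ N] [FiniteDimensional ℝ D]
    (hND : N.map J = D) (hDN : D.map J = N) :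
    ∀ u ∈ D.map (N.subtype ∘ₗ (Submodule.orthogonalProjection N).toLinearMap), u ≠ 0 →
      ∃ v ∈ D.map (N.subtype ∘ₗ (Submodule.orthogonalProjection N).toLinearMap), ⟪J u, v⟫ ≠ 0 := by
  rintro u ⟨d, hd, rfl⟩ hu0
  set u : V := (Submodule.orthogonalProjection N d : V) with hu_def
  have hue : (N.subtype ∘ₗ (Submodule.orthogonalProjection N).toLinearMap) d = u := rfl
  rw [hue] at hu0 ⊢
  have huN : u ∈ N := (Submodule.orthogonalProjection N d).2
  have hJuD : J u ∈ D := hND ▸ Submodule.mem_map_of_mem huN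
  have hJdN : J d ∈ N := hDN ▸ Submodule.mem_map_of_mem hd
  have h1 : ⟪d - u, u⟫ = 0 := N.starProjection_inner_eq_zero d u huN
  rw [inner_sub_left] at h1
  have hud0 : ⟪u, d⟫ ≠ 0 := by
    rw [real_inner_comm]
    intro h
    rw [h] at h1
    have huu : ⟪u, u⟫ = 0 := by linarith
    exact hu0 (by rwa [inner_self_eq_zero (𝕜 := ℝ)] at huu)
  have h2 : ⟪J u, J d⟫ ≠ 0 := by rw [hJiso]; exact hud0
  refine ⟨(Submodule.orthogonalProjection N (J u) : V), ⟨J u, hJuD, rfl⟩, ?_⟩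
  set v : V := (Submodule.orthogonalProjection N (J u) : V) with hv_def
  have h3 : ⟪J u - v, v⟫ = 0 := N.starProjection_inner_eq_zero (J u) v
    (Submodule.orthogonalProjection N (J u)).2
  rw [inner_sub_left] at h3
  have hvne : v ≠ 0 := by
    intro h0
    have h4 : ⟪J u - v, J d⟫ = 0 := N.starProjection_inner_eq_zero (J u) (J d) hJdN
    rw [h0, sub_zero] at h4
    exact h2 h4
  have hJuv : ⟪J u, v⟫ = ⟪v, v⟫ := by linarith
  rw [hJuv]
  intro h
  exact hvne (by rwa [inner_self_eq_zero (𝕜 := ℝ)] at h)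
end
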